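/- For each s ∈ [t]: the element a_{i_s, u_{i_s}+1} is a minimal element of P_𝓛, the element a_{p_s, v_{p_s}} is a maximal element of P_𝓛, a_{i_s, u_{i_s}+1} ≤ a_{p_s, v_{p_s}}, and every saturated chain in P_𝓛 with least element a_{i_s, u_{i_s}+1} and greatest element a_{p_s, v_{p_s}} has length Δ_{p_s} + i_s − p_s − 1. -/

import Mathlib

namespace LadderPaper

/-- The tuple `a_{i,j}`: entry `t` is `u t` for `t < i` and `max (j + (t - i)) (u t)` for
`t ≥ i` (indices `t ∈ [1,n]`; entries outside `[1,n]` are set to `0`). -/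
def atuple (u : ℕ → ℤ) (n i : ℕ) (j : ℤ) : ℕ → ℤ := fun t =>
  if 1 ≤ t ∧ t ≤ n then
    (if t < i then u t else max (j + ((t : ℤ) - (i : ℤ))) (u t))
  else 0

/-- The tuple `b_{i,j}`: like `a_{i,j}` but with `i`-th entry `j - 1`. -/
def btuple (u : ℕ → ℤ) (n i : ℕ) (j : ℤ) : ℕ → ℤ := fun t =>
  if 1 ≤ t ∧ t ≤ n then
    (if t < i then u t
     else if t = i then j - 1
     else max (j + ((t : ℤ) - (i : ℤ))) (u t))
  else 0

/-- The tuple `(u_1, …, u_n)`. -/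
def utuple (u : ℕ → ℤ) (n : ℕ) : ℕ → ℤ := fun t =>
  if 1 ≤ t ∧ t ≤ n then u t else 0

/-- The lattice `𝓛` of tuples `c` with `u t ≤ c t ≤ v t` for `t ∈ [1,n]`, strictly
increasing entries, and (normalization) `c t = 0` outside `[1,n]`.  It carries the
componentwise (induced product) order. -/
def ladderL (n : ℕ) (u v : ℕ → ℤ) : Set (ℕ → ℤ) :=
  {c | (∀ t, 1 ≤ t → t ≤ n → u t ≤ c t ∧ c t ≤ v t) ∧
       (∀ t, 1 ≤ t → t + 1 ≤ n → c t < c (t + 1)) ∧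
       (∀ t, t = 0 ∨ n < t → c t = 0)}

/-- The set `P_𝓛 = { a_{i,j} : i ∈ [n], j ∈ [u_i + 1, v_i] }`. -/
def PL (n : ℕ) (u v : ℕ → ℤ) : Set (ℕ → ℤ) :=
  {x | ∃ i : ℕ, ∃ j : ℤ, 1 ≤ i ∧ i ≤ n ∧ u i + 1 ≤ j ∧ j ≤ v i ∧ x = atuple u n i j}

/-- The product poset `𝓛 × [r]`. -/
def ladderLr (n : ℕ) (u v : ℕ → ℤ) (r : ℤ) : Set ((ℕ → ℤ) × ℤ) :=
  {p | p.1 ∈ ladderL n u v ∧ 1 ≤ p.2 ∧ p.2 ≤ r}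

/-- The set `P_{𝓛×[r]} = { (a_{i,j}, 1) } ∪ { ((u_1,…,u_n), k) : k ∈ [2,r] }`. -/
def PLr (n : ℕ) (u v : ℕ → ℤ) (r : ℤ) : Set ((ℕ → ℤ) × ℤ) :=
  {p | (p.1 ∈ PL n u v ∧ p.2 = 1) ∨ (p.1 = utuple u n ∧ 2 ≤ p.2 ∧ p.2 ≤ r)}

/-- `ε_i > 1`, with the convention `ε_n > 1` (i.e. `i = n` or `u_{i+1} - u_i > 1`). -/
def epsGt1 (u : ℕ → ℤ) (n i : ℕ) : Prop := i = n ∨ 1 < u (i + 1) - u i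

/-- `θ_{i-1} > 1`, with the convention `θ_0 > 1` (i.e. `i = 1` or `v_i - v_{i-1} > 1`). -/
def thetaGt1 (v : ℕ → ℤ) (i : ℕ) : Prop := i = 1 ∨ 1 < v i - v (i - 1)

/-- Membership in `C = { i ∈ [n-1] : v_i < u_{i+1} } ∪ { n }`. -/
def inC (n : ℕ) (u v : ℕ → ℤ) (i : ℕ) : Prop :=
  (1 ≤ i ∧ i + 1 ≤ n ∧ v i < u (i + 1)) ∨ i = n

/-- The set `C = { i ∈ [n-1] : v_i < u_{i+1} } ∪ { n }`. -/
def Cset (n : ℕ) (u v : ℕ → ℤ) : Set ℕ :=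
  {i | 1 ≤ i ∧ i + 1 ≤ n ∧ v i < u (i + 1)} ∪ {n}

/-- `[p,q]` is one of the blocks `[p_s, q_s]` determined by `C`: `q ∈ C`,
no element of `C` lies in `[p, q-1]`, and either `p = 1` or `p - 1 ∈ C`. -/
def IsBlock (n : ℕ) (u v : ℕ → ℤ) (p q : ℕ) : Prop :=
  1 ≤ p ∧ p ≤ q ∧ q ≤ n ∧ inC n u v q ∧
    (∀ j, p ≤ j → j < q → ¬ inC n u v j) ∧ (p = 1 ∨ inC n u v (p - 1))

/-- `i0 = min { i ∈ [p,q] : ε_i > 1 }` (with the convention `ε_n > 1`). -/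
def IsBlockMin (n : ℕ) (u : ℕ → ℤ) (p q i0 : ℕ) : Prop :=
  p ≤ i0 ∧ i0 ≤ q ∧ epsGt1 u n i0 ∧ ∀ j, p ≤ j → j < i0 → ¬ epsGt1 u n j

/-- The comparability graph of a poset: two distinct elements are adjacent
iff they are comparable. -/
def compGraph (α : Type*) [Preorder α] : SimpleGraph α where
  Adj x y := x ≠ y ∧ (x ≤ y ∨ y ≤ x)
  symm := ⟨fun x y h => ⟨Ne.symm h.1, Or.symm h.2⟩⟩
  loopless := ⟨fun x h => h.1 rfl⟩

/-- A poset is pure if all of its maximal chains have the same cardinality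
(equivalently, the same length). -/
def IsPure (α : Type*) [Preorder α] : Prop :=
  ∀ A B : Set α, IsMaxChain (· ≤ ·) A → IsMaxChain (· ≤ ·) B → A.ncard = B.ncard

/- In the coordinates `a_{i,j} ↦ (i, j - i)`, with `i` ordered reversely, `P_𝓛` is an
order-convex subset of `ℕᵒᵈ × ℤ`, because `u_t - t` and `v_t - t` are weakly increasing.
Hence covers in `P_𝓛` are covers of the product, and `ρ(a_{i,j}) = j - 2i` is a rank
function: every saturated chain from `x` to `y` has length `ρ y - ρ x`.  Minimality of
`a_{i_s, u_{i_s}+1}` comes from `ε_{i_s} > 1`, maximality of `a_{p_s, v_{p_s}}` from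
`v_{p_s - 1} < u_{p_s}`; and `u_t - t` is constant on `[p_s, i_s]`, which turns `ρ y - ρ x`
into `Δ_{p_s} + i_s - p_s - 1`. -/

open OrderDual

lemma rank_last_eq_of_covBy {α : Type*} [Preorder α] (r : α → ℤ)
    (hr : ∀ a b, a ⋖ b → r b = r a + 1) {N : ℕ} (f : Fin (N + 1) → α)
    (hf : ∀ s : Fin N, f s.castSucc ⋖ f s.succ) : r (f (Fin.last N)) = r (f 0) + N := by
  suffices ∀ k : Fin (N + 1), r (f k) = r (f 0) + k from this _
  refine Fin.induction (by simp) fun s ih => ?_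
  rw [hr _ _ (hf s), ih]
  simp only [Fin.val_succ, Fin.val_castSucc]
  push_cast
  ring

def diag (i : ℕ) (j : ℤ) : ℕᵒᵈ × ℤ := (toDual i, j - i)

lemma diag_le_diag_iff {i i' : ℕ} {j j' : ℤ} :
    diag i j ≤ diag i' j' ↔ i' ≤ i ∧ j - i ≤ j' - i' := by
  simp only [diag, Prod.mk_le_mk, toDual_le_toDual]

def diagRank (z : ℕᵒᵈ × ℤ) : ℤ := z.2 - ofDual z.1

lemma diagRank_of_covBy {z w : ℕᵒᵈ × ℤ} (h : z ⋖ w) : diagRank w = diagRank z + 1 := by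
  obtain ⟨a, k⟩ := z
  obtain ⟨b, l⟩ := w
  rcases Prod.mk_covBy_mk_iff.1 h with ⟨hab, rfl⟩ | ⟨hkl, rfl⟩
  · have := Nat.covBy_iff_add_one_eq.1 (ofDual_covBy_ofDual_iff.2 hab)
    simp only [diagRank]
    omega
  · have := Order.covBy_iff_add_one_eq.1 hkl
    simp only [diagRank]
    omega

section Ladder

variable {n : ℕ} {u v : ℕ → ℤ}

lemma sub_cast_le_sub_cast {w : ℕ → ℤ} (hw : ∀ i, 1 ≤ i → i + 1 ≤ n → w i < w (i + 1))
    {s t : ℕ} (hs : 1 ≤ s) (hst : s ≤ t) (htn : t ≤ n) : w s - s ≤ w t - t := by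
  induction t, hst using Nat.le_induction with
  | base => exact le_rfl
  | succ t hst ih =>
    have := hw t (hs.trans hst) htn
    push_cast
    linarith [ih (by omega)]

lemma atuple_le_atuple_iff {i i' : ℕ} {j j' : ℤ} (hi : 1 ≤ i) (hin : i ≤ n)
    (hj : u i + 1 ≤ j) :
    atuple u n i j ≤ atuple u n i' j' ↔ diag i j ≤ diag i' j' := by
  rw [diag_le_diag_iff]
  constructor
  · intro h
    have hi' := h i
    simp only [atuple, hi, hin, and_self, if_true, lt_irrefl, if_false, sub_self, add_zero,
      max_eq_left (show u i ≤ j by omega)] at hi'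
    split_ifs at hi' with hii
    · omega
    · exact ⟨not_lt.1 hii, by omega⟩
  · rintro ⟨hii, hk⟩ t
    simp only [atuple]
    split_ifs <;> omega

lemma atuple_mem_PL {i : ℕ} {j : ℤ} (hi : 1 ≤ i) (hin : i ≤ n) (hj₁ : u i + 1 ≤ j)
    (hj₂ : j ≤ v i) : atuple u n i j ∈ PL n u v :=
  ⟨i, j, hi, hin, hj₁, hj₂, rfl⟩

noncomputable def coord (x : PL n u v) : ℕᵒᵈ × ℤ :=
  diag x.2.choose x.2.choose_spec.choose

lemma coord_eq (x : PL n u v) {i : ℕ} {j : ℤ} (hi : 1 ≤ i) (hin : i ≤ n) (hj : u i + 1 ≤ j)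
    (hx : (x : ℕ → ℤ) = atuple u n i j) : coord x = diag i j := by
  obtain ⟨hi₀, hin₀, hj₀, -, hx₀⟩ := x.2.choose_spec.choose_spec
  have he := hx₀.symm.trans hx
  exact le_antisymm ((atuple_le_atuple_iff hi₀ hin₀ hj₀).1 he.le)
    ((atuple_le_atuple_iff hi hin hj).1 he.ge)

lemma coord_le_coord_iff {x y : PL n u v} : coord x ≤ coord y ↔ x ≤ y := by
  obtain ⟨i, j, hi, hin, hj, -, hx⟩ := x.2
  obtain ⟨i', j', hi', hin', hj', -, hy⟩ := y.2
  rw [coord_eq x hi hin hj hx, coord_eq y hi' hin' hj' hy, ← Subtype.coe_le_coe, hx, hy,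
    atuple_le_atuple_iff hi hin hj]

noncomputable def coordEmbedding : PL n u v ↪o ℕᵒᵈ × ℤ :=
  OrderEmbedding.ofMapLEIff coord fun _ _ => coord_le_coord_iff

lemma ordConnected_range_coordEmbedding
    (humono : ∀ i, 1 ≤ i → i + 1 ≤ n → u i < u (i + 1))
    (hvmono : ∀ i, 1 ≤ i → i + 1 ≤ n → v i < v (i + 1)) :
    (Set.range (coordEmbedding (n := n) (u := u) (v := v))).OrdConnected := by
  refine ⟨?_⟩
  rintro _ ⟨x, rfl⟩ _ ⟨y, rfl⟩ ⟨a, k⟩ ⟨hxz, hzy⟩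
  obtain ⟨i₁, j₁, hi₁, hin₁, hj₁, -, hx⟩ := x.2
  obtain ⟨i₂, j₂, hi₂, hin₂, hj₂, hj₂v, hy⟩ := y.2
  change coord x ≤ _ at hxz
  change _ ≤ coord y at hzy
  rw [coord_eq x hi₁ hin₁ hj₁ hx] at hxz
  rw [coord_eq y hi₂ hin₂ hj₂ hy] at hzy
  set i := ofDual a
  obtain ⟨hii₁, hk₁⟩ : i ≤ i₁ ∧ j₁ - i₁ ≤ k := hxz
  obtain ⟨hii₂, hk₂⟩ : i₂ ≤ i ∧ k ≤ j₂ - i₂ := hzy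
  have hu := sub_cast_le_sub_cast humono (hi₂.trans hii₂) hii₁ hin₁
  have hv := sub_cast_le_sub_cast hvmono hi₂ hii₂ (hii₁.trans hin₁)
  have hi : 1 ≤ i := hi₂.trans hii₂
  have hin : i ≤ n := hii₁.trans hin₁
  have hj : u i + 1 ≤ k + i := by omega
  refine ⟨⟨_, atuple_mem_PL hi hin hj (by omega)⟩, ?_⟩
  change coord _ = _
  rw [coord_eq _ hi hin hj rfl, diag, add_sub_cancel_right]
  rfl

lemma coord_covBy (humono : ∀ i, 1 ≤ i → i + 1 ≤ n → u i < u (i + 1))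
    (hvmono : ∀ i, 1 ≤ i → i + 1 ≤ n → v i < v (i + 1)) {x y : PL n u v} (h : x ⋖ y) :
    coord x ⋖ coord y :=
  h.image coordEmbedding (ordConnected_range_coordEmbedding humono hvmono)

lemma isMin_atuple (humono : ∀ i, 1 ≤ i → i + 1 ≤ n → u i < u (i + 1)) {i : ℕ} (hi : 1 ≤ i)
    (hin : i ≤ n) (huv : u i < v i) (heps : epsGt1 u n i) :
    IsMin (⟨atuple u n i (u i + 1), atuple_mem_PL hi hin le_rfl huv⟩ : PL n u v) := by
  intro z hz
  obtain ⟨i', j', hi', hin', hj', -, hz'⟩ := z.2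
  rw [← coord_le_coord_iff, coord_eq z hi' hin' hj' hz', coord_eq _ hi hin le_rfl rfl,
    diag_le_diag_iff] at hz ⊢
  obtain rfl : i' = i := by
    refine le_antisymm (not_lt.1 fun hlt => ?_) hz.1
    rcases heps with rfl | heps
    · omega
    · have := sub_cast_le_sub_cast humono (s := i + 1) (by omega) hlt hin'
      push_cast at this
      omega
  omega

lemma isMax_atuple (hvmono : ∀ i, 1 ≤ i → i + 1 ≤ n → v i < v (i + 1)) {p : ℕ} (hp : 1 ≤ p)
    (hpn : p ≤ n) (huv : u p < v p) (hgap : 1 < p → v (p - 1) < u p) :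
    IsMax (⟨atuple u n p (v p), atuple_mem_PL hp hpn huv le_rfl⟩ : PL n u v) := by
  intro z hz
  obtain ⟨i', j', hi', hin', hj', hj'v, hz'⟩ := z.2
  rw [← coord_le_coord_iff, coord_eq z hi' hin' hj' hz', coord_eq _ hp hpn huv rfl,
    diag_le_diag_iff] at hz ⊢
  obtain rfl : i' = p := by
    refine le_antisymm hz.1 (not_lt.1 fun hlt => ?_)
    have := sub_cast_le_sub_cast hvmono hi' (Nat.le_sub_one_of_lt hlt) (by omega)
    have := hgap (by omega)
    omega
  omega

end Ladder

lemma IsBlock.v_pred_lt {n : ℕ} {u v : ℕ → ℤ} {p q : ℕ} (hb : IsBlock n u v p q) (hp : 1 < p) :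
    v (p - 1) < u p := by
  obtain ⟨-, hpq, hqn, -, -, rfl | ⟨-, -, h⟩ | h⟩ := hb
  · omega
  · rwa [Nat.sub_add_cancel hp.le] at h
  · omega

lemma IsBlockMin.sub_cast_eq {n : ℕ} {u : ℕ → ℤ} {p q i₀ : ℕ}
    (humono : ∀ i, 1 ≤ i → i + 1 ≤ n → u i < u (i + 1)) (hbm : IsBlockMin n u p q i₀)
    (hp : 1 ≤ p) (hi₀n : i₀ ≤ n) : u i₀ - i₀ = u p - p := by
  obtain ⟨hpi, -, -, hmin⟩ := hbm
  induction i₀, hpi using Nat.le_induction with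
  | base => rfl
  | succ t hpt ih =>
    have hstep : ¬epsGt1 u n t := hmin t hpt (Nat.lt_succ_self t)
    simp only [epsGt1, not_or] at hstep
    have := humono t (hp.trans hpt) (by omega)
    push_cast
    linarith [ih (by omega) fun j hj hjt => hmin j hj (hjt.trans (Nat.lt_succ_self t))]


theorem stmt14_general
    (n : ℕ) (u v : ℕ → ℤ)
    (humono : ∀ i, 1 ≤ i → i + 1 ≤ n → u i < u (i + 1))
    (hvmono : ∀ i, 1 ≤ i → i + 1 ≤ n → v i < v (i + 1))
    (huv : ∀ i, 1 ≤ i → i ≤ n → u i < v i)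
    (p q i0 : ℕ) (hb : IsBlock n u v p q) (hbm : IsBlockMin n u p q i0) :
    atuple u n i0 (u i0 + 1) ∈ PL n u v ∧
    atuple u n p (v p) ∈ PL n u v ∧
    ∀ x y : ↥(PL n u v),
      (x : ℕ → ℤ) = atuple u n i0 (u i0 + 1) → (y : ℕ → ℤ) = atuple u n p (v p) →
      (IsMin x ∧ IsMax y ∧ x ≤ y ∧
        ∀ (N : ℕ) (f : Fin (N + 1) → ↥(PL n u v)),
          (∀ s : Fin N, f s.castSucc ⋖ f s.succ) → f 0 = x → f (Fin.last N) = y →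
          (N : ℤ) = (v p - u p) + (i0 : ℤ) - (p : ℤ) - 1) := by
  have hp : 1 ≤ p := hb.1
  have hpn : p ≤ n := hb.2.1.trans hb.2.2.1
  have hpi0 : p ≤ i0 := hbm.1
  have hi0 : 1 ≤ i0 := hp.trans hpi0
  have hi0n : i0 ≤ n := hbm.2.1.trans hb.2.2.1
  have hblock := hbm.sub_cast_eq humono hp hi0n
  have huv0 := huv i0 hi0 hi0n
  have huvp := huv p hp hpn
  have hx0 := atuple_mem_PL hi0 hi0n le_rfl huv0
  have hy0 := atuple_mem_PL hp hpn huvp le_rfl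
  refine ⟨hx0, hy0, fun x y hx hy => ?_⟩
  obtain rfl : x = ⟨_, hx0⟩ := Subtype.ext hx
  obtain rfl : y = ⟨_, hy0⟩ := Subtype.ext hy
  have hcx := coord_eq ⟨_, hx0⟩ hi0 hi0n le_rfl rfl
  have hcy := coord_eq ⟨_, hy0⟩ hp hpn huvp rfl
  refine ⟨isMin_atuple humono hi0 hi0n huv0 hbm.2.2.1,
    isMax_atuple hvmono hp hpn huvp hb.v_pred_lt,
    ?_, fun N f hf hf0 hfN => ?_⟩
  · rw [← coord_le_coord_iff, hcx, hcy, diag_le_diag_iff]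
    omega
  · have hrank := rank_last_eq_of_covBy (diagRank ∘ coord)
      (fun _ _ h => diagRank_of_covBy (coord_covBy humono hvmono h)) f hf
    simp only [Function.comp_apply, hf0, hfN, hcx, hcy, diag, diagRank, ofDual_toDual] at hrank
    omega

theorem stmt14
    (n m : ℕ) (u v : ℕ → ℤ)
    (hn : 1 ≤ n) (hnm : n < m)
    (hu1 : u 1 = 1)
    (humono : ∀ i, 1 ≤ i → i + 1 ≤ n → u i < u (i + 1))
    (hum : u n < (m : ℤ))
    (hv1 : 1 < v 1)
    (hvmono : ∀ i, 1 ≤ i → i + 1 ≤ n → v i < v (i + 1))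
    (hvn : v n = (m : ℤ))
    (huv : ∀ i, 1 ≤ i → i ≤ n → u i < v i)
    (hstep : ∀ i, 1 ≤ i → i + 1 ≤ n → u (i + 1) ≤ v i + 1)
    (p q i0 : ℕ) (hb : IsBlock n u v p q) (hbm : IsBlockMin n u p q i0) :
    atuple u n i0 (u i0 + 1) ∈ PL n u v ∧
    atuple u n p (v p) ∈ PL n u v ∧
    ∀ x y : ↥(PL n u v),
      (x : ℕ → ℤ) = atuple u n i0 (u i0 + 1) → (y : ℕ → ℤ) = atuple u n p (v p) →
      (IsMin x ∧ IsMax y ∧ x ≤ y ∧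
        ∀ (N : ℕ) (f : Fin (N + 1) → ↥(PL n u v)),
          (∀ s : Fin N, f s.castSucc ⋖ f s.succ) → f 0 = x → f (Fin.last N) = y →
          (N : ℤ) = (v p - u p) + (i0 : ℤ) - (p : ℤ) - 1) :=
  stmt14_general n u v humono hvmono huv p q i0 hb hbm

end LadderPaper
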